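/- Let Y ⊆ ℝ^d be a nonempty closed convex set and f : ℝ^d × ℝ^d → ℝ continuously differentiable, concave in y for fixed x, with ‖∇_y f(x₁,y) − ∇_y f(x₂,y)‖ ≤ L_x ‖x₁ − x₂‖, ‖∇_y f(x,y₁) − ∇_y f(x,y₂)‖ ≤ L_y ‖y₁ − y₂‖, and γ-strongly concave in y. Let β > 0, x^t, x^{t+1} ∈ ℝ^d, y^{t−1} ∈ Y, y^t = proj_Y(y^{t−1} + β ∇_y f(x^t, y^{t−1})), y^{t+1} = proj_Y(y^t + β ∇_y f(x^{t+1}, y^t)). Then f(x^{t+1}, y^{t+1}) − f(x^{t+1}, y^t) ≤ (1/β)‖y^{t+1} − y^t‖² + (1/(2β))‖y^t − y^{t−1}‖² + (β L_x²/2)‖x^{t+1} − x^t‖² − (γ − β L_y²/2)‖y^t − y^{t−1}‖². -/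
import Mathlib


open scoped RealInnerProductSpace

set_option maxHeartbeats 1000000

/-- Partial gradient of `f(x,y)` with respect to `y`. -/
noncomputable def gradY {d : ℕ} (f : EuclideanSpace ℝ (Fin d) → EuclideanSpace ℝ (Fin d) → ℝ)
    (x y : EuclideanSpace ℝ (Fin d)) : EuclideanSpace ℝ (Fin d) :=
  gradient (f x) y

/-- `p` is the Euclidean projection of `a` onto `C`. -/
def IsProjOn {d : ℕ} (C : Set (EuclideanSpace ℝ (Fin d)))
    (a p : EuclideanSpace ℝ (Fin d)) : Prop :=
  p ∈ C ∧ ∀ z ∈ C, ‖p - a‖ ≤ ‖z - a‖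

/-- Variational characterization of the projection onto a convex set. -/
lemma isProjOn_inner_le {d : ℕ} {Y : Set (EuclideanSpace ℝ (Fin d))} (hY : Convex ℝ Y)
    {a p : EuclideanSpace ℝ (Fin d)} (h : IsProjOn Y a p) :
    ∀ z ∈ Y, ⟪a - p, z - p⟫ ≤ 0 := by
  haveI : Nonempty Y := ⟨⟨p, h.1⟩⟩
  have hinf : ‖a - p‖ = ⨅ w : Y, ‖a - w‖ := by
    apply le_antisymm
    · refine le_ciInf fun w => ?_
      have := h.2 w w.2
      rwa [norm_sub_rev p, norm_sub_rev (w : EuclideanSpace ℝ (Fin d))] at this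
    · have hb : BddBelow (Set.range fun w : Y => ‖a - (w : EuclideanSpace ℝ (Fin d))‖) :=
        ⟨0, by rintro x ⟨w, rfl⟩; exact norm_nonneg _⟩
      exact ciInf_le hb ⟨p, h.1⟩
  exact (norm_eq_iInf_iff_real_inner_le_zero hY h.1).mp hinf

/-- Ascent lemma for one projected gradient-ascent step:
`f(x^{t+1},y^{t+1}) - f(x^{t+1},y^t) ≤ (1/β)‖y^{t+1} - y^t‖² + (1/(2β))‖y^t - y^{t-1}‖²
+ (β L_x²/2)‖x^{t+1} - x^t‖² - (γ - β L_y²/2)‖y^t - y^{t-1}‖²`. -/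
theorem zo_minmax_pga_function_ascent
    {d : ℕ} (Y : Set (EuclideanSpace ℝ (Fin d)))
    (hYne : Y.Nonempty) (hYclosed : IsClosed Y) (hYconvex : Convex ℝ Y)
    (f : EuclideanSpace ℝ (Fin d) → EuclideanSpace ℝ (Fin d) → ℝ)
    (hf : ContDiff ℝ 1 (Function.uncurry f))
    (γ Lx Ly β : ℝ) (hγ : 0 < γ) (hβ : 0 < β)
    (hconc : ∀ x y₁ y₂ : EuclideanSpace ℝ (Fin d),
      f x y₁ ≤ f x y₂ + ⟪gradY f x y₂, y₁ - y₂⟫ - γ / 2 * ‖y₁ - y₂‖ ^ 2)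
    (hLx : ∀ (x₁ x₂ y : EuclideanSpace ℝ (Fin d)),
      ‖gradY f x₁ y - gradY f x₂ y‖ ≤ Lx * ‖x₁ - x₂‖)
    (hLy : ∀ (x y₁ y₂ : EuclideanSpace ℝ (Fin d)),
      ‖gradY f x y₁ - gradY f x y₂‖ ≤ Ly * ‖y₁ - y₂‖)
    (xt xt1 : EuclideanSpace ℝ (Fin d))
    (ytm1 yt yt1 : EuclideanSpace ℝ (Fin d)) (hytm1 : ytm1 ∈ Y)
    (hyt : IsProjOn Y (ytm1 + β • gradY f xt ytm1) yt)
    (hyt1 : IsProjOn Y (yt + β • gradY f xt1 yt) yt1) :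
    f xt1 yt1 - f xt1 yt ≤
      1 / β * ‖yt1 - yt‖ ^ 2
      + 1 / (2 * β) * ‖yt - ytm1‖ ^ 2
      + β * Lx ^ 2 / 2 * ‖xt1 - xt‖ ^ 2
      - (γ - β * Ly ^ 2 / 2) * ‖yt - ytm1‖ ^ 2 := by
  set g := gradY f xt1 yt with hgdef
  set p := gradY f xt1 ytm1 with hpdef
  set q := gradY f xt ytm1 with hqdef
  set u := yt1 - yt with hudef
  set v := yt - ytm1 with hvdef
  set A := ‖u‖ with hAdef
  set B := ‖v‖ with hBdef
  set C := ‖xt1 - xt‖ with hCdef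
  set W := ‖u - v‖ with hWdef
  -- (1) strong concavity between yt1 and yt
  have c0 : f xt1 yt1 - f xt1 yt ≤ ⟪g, u⟫ - γ / 2 * A ^ 2 := by
    have := hconc xt1 yt1 yt
    linarith
  -- (2) projection variational inequality for yt, tested at yt1
  have F2 : β * ⟪q, u⟫ ≤ ⟪v, u⟫ := by
    have h0 := isProjOn_inner_le hYconvex hyt yt1 hyt1.1
    have e1 : ⟪ytm1 + β • q - yt, yt1 - yt⟫ = β * ⟪q, u⟫ - ⟪v, u⟫ := by
      rw [hudef, hvdef]
      simp only [inner_sub_left, inner_add_left, inner_sub_right, real_inner_smul_left]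
      ring
    rw [e1] at h0
    linarith
  -- (3) strong monotonicity of the gradient in y at x = xt1
  have F3 : ⟪g, v⟫ - ⟪p, v⟫ ≤ -γ * B ^ 2 := by
    have c1 := hconc xt1 ytm1 yt
    have c2 := hconc xt1 yt ytm1
    have e2 : ⟪g, ytm1 - yt⟫ = -⟪g, v⟫ := by
      rw [hvdef, ← inner_neg_right, neg_sub]
    have e3 : ‖ytm1 - yt‖ = B := by rw [hBdef, hvdef, norm_sub_rev]
    rw [e2, e3] at c1
    have e4 : ⟪p, yt - ytm1⟫ = ⟪p, v⟫ := by rw [hvdef]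
    rw [e4, ← hBdef] at c2
    linarith
  -- (4) Lipschitz in x
  have F4 : ⟪p - q, u⟫ ≤ Lx * C * A :=
    (real_inner_le_norm _ _).trans
      (mul_le_mul_of_nonneg_right (hLx xt1 xt ytm1) (norm_nonneg _))
  -- (5) Lipschitz in y
  have F5 : ⟪g - p, u - v⟫ ≤ Ly * B * W :=
    (real_inner_le_norm _ _).trans
      (mul_le_mul_of_nonneg_right (hLy xt1 yt ytm1) (norm_nonneg _))
  -- (6) decomposition of ⟪g, u⟫
  have F6 : ⟪g, u⟫ = ⟪q, u⟫ + ⟪p - q, u⟫ + (⟪g, v⟫ - ⟪p, v⟫) + ⟪g - p, u - v⟫ := by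
    simp only [inner_sub_left, inner_sub_right]
    ring
  -- (7) parallelogram-type identity
  have F7 : W ^ 2 = A ^ 2 - 2 * ⟪v, u⟫ + B ^ 2 := by
    rw [hWdef, hAdef, hBdef, norm_sub_sq_real, real_inner_comm]
  have h2β : (0 : ℝ) < 2 * β := by linarith
  have key : 2 * β * (f xt1 yt1 - f xt1 yt) ≤
      2 * β * (1 / β * A ^ 2 + 1 / (2 * β) * B ^ 2 + β * Lx ^ 2 / 2 * C ^ 2
        - (γ - β * Ly ^ 2 / 2) * B ^ 2) := by
    have hRHS : 2 * β * (1 / β * A ^ 2 + 1 / (2 * β) * B ^ 2 + β * Lx ^ 2 / 2 * C ^ 2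
        - (γ - β * Ly ^ 2 / 2) * B ^ 2)
        = 2 * A ^ 2 + B ^ 2 + β ^ 2 * Lx ^ 2 * C ^ 2 - 2 * β * γ * B ^ 2
          + β ^ 2 * Ly ^ 2 * B ^ 2 := by
      field_simp
      ring

    rw [hRHS]
    have s0 := mul_le_mul_of_nonneg_left c0 h2β.le
    have s3 := mul_le_mul_of_nonneg_left F3 h2β.le
    have s4 := mul_le_mul_of_nonneg_left F4 h2β.le
    have s5 := mul_le_mul_of_nonneg_left F5 h2β.le
    have s2 := mul_le_mul_of_nonneg_left F2 (by norm_num : (0:ℝ) ≤ 2)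
    nlinarith [s0, s2, s3, s4, s5, F6, F7, sq_nonneg (β * Lx * C - A),
      sq_nonneg (β * Ly * B - W),
      mul_nonneg (mul_nonneg hβ.le hγ.le) (sq_nonneg A)]
  exact le_of_mul_le_mul_left key h2β
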